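/- arXiv:2208.10143 — 9 statements merged into one kernel-verified Lean document; each statement's English description precedes it below -/
import Mathlib

section
/- Let μ : T → ℝ≥0 be refinement indicators on a finite set T, let 0 < θ ≤ 1, and let M ⊆ T satisfy the Dörfler criterion θ · Σ_{t∈T} μ(t)² ≤ Σ_{t∈M} μ(t)². Then max_{t ∈ T\M} μ(t) ≤ √((1−θ)/θ) · (Σ_{t∈M} μ(t)²)^{1/2}, i.e., Dörfler marking implies the general marking criterion with M(x) = √((1−θ)θ^{-1}) x. -/
/-- Dörfler marking implies the general marking criterion with `M(x) = √((1-θ)/θ) x`. -/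
theorem stmt_2 {α : Type*} [DecidableEq α] (T M : Finset α) (μ : α → ℝ) (θ : ℝ)
    (hμ : ∀ t ∈ T, 0 ≤ μ t) (hθ0 : 0 < θ) (hθ1 : θ ≤ 1) (hMT : M ⊆ T)
    (hdoerfler : θ * ∑ t ∈ T, μ t ^ 2 ≤ ∑ t ∈ M, μ t ^ 2) :
    ∀ t ∈ T \ M,
      μ t ≤ Real.sqrt ((1 - θ) / θ) * Real.sqrt (∑ t' ∈ M, μ t' ^ 2) := by
  intro t ht
  have htT : t ∈ T := (Finset.mem_sdiff.mp ht).1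
  have h1 : μ t ^ 2 ≤ ∑ s ∈ T \ M, μ s ^ 2 :=
    Finset.single_le_sum (fun s hs => sq_nonneg (μ s)) ht
  have hsplit : ∑ s ∈ T \ M, μ s ^ 2 = (∑ s ∈ T, μ s ^ 2) - ∑ s ∈ M, μ s ^ 2 :=
    Finset.sum_sdiff_eq_sub hMT
  have h2 : ∑ s ∈ T, μ s ^ 2 ≤ (∑ s ∈ M, μ s ^ 2) / θ := by
    rw [le_div_iff₀ hθ0, mul_comm]; exact hdoerfler
  have h3 : μ t ^ 2 ≤ (1 - θ) / θ * ∑ s ∈ M, μ s ^ 2 := by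
    have : (1 - θ) / θ * ∑ s ∈ M, μ s ^ 2 =
        (∑ s ∈ M, μ s ^ 2) / θ - ∑ s ∈ M, μ s ^ 2 := by field_simp
    rw [this]
    linarith [h1, hsplit.le]
  calc μ t = Real.sqrt (μ t ^ 2) := (Real.sqrt_sq (hμ t htT)).symm
    _ ≤ Real.sqrt ((1 - θ) / θ * ∑ s ∈ M, μ s ^ 2) := Real.sqrt_le_sqrt h3
    _ = Real.sqrt ((1 - θ) / θ) * Real.sqrt (∑ t' ∈ M, μ t' ^ 2) := by
        rw [Real.sqrt_mul (div_nonneg (by linarith) hθ0.le)]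
end

section
/- Let T be a finite nonempty set, μ : T → ℝ≥0, 0 < θ ≤ 1, and define the equidistribution set M := { t ∈ T : μ(t) ≥ (1−θ)·μ(T)/#T } where μ(T) = (Σ_{t∈T} μ(t)²)^{1/2}. Then max_{t∈T\M} μ(t) ≤ μ(M) whenever μ(T) > 0, i.e., the equidistribution criterion satisfies the general marking criterion with M(x)=x. -/
/-!
The largest value `μ tₘ` on `T` is at least the mean `μ(T)/#T`, because `ℓ²` is dominated by `ℓ¹`:
`μ(T) ≤ ∑ μ ≤ #T · μ tₘ`. Hence `tₘ ∈ M` once `θ ≥ 0`, and every `t ∉ M` satisfies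
`μ t ≤ μ tₘ ≤ μ(M)`.
-/

open Finset

theorem Finset.sqrt_sum_sq_le_card_mul {α : Type*} {T : Finset α} {μ : α → ℝ} {m : ℝ}
    (hμ : ∀ t ∈ T, 0 ≤ μ t) (hm : ∀ t ∈ T, μ t ≤ m) :
    Real.sqrt (∑ t ∈ T, μ t ^ 2) ≤ #T * m :=
  calc Real.sqrt (∑ t ∈ T, μ t ^ 2)
      ≤ ∑ t ∈ T, μ t := Real.sqrt_le_left (sum_nonneg hμ) |>.mpr (sum_sq_le_sq_sum_of_nonneg hμ)
    _ ≤ #T * m := by simpa using sum_le_card_nsmul T μ m hm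

theorem Finset.le_sqrt_sum_sq_of_mem {α : Type*} {U : Finset α} {μ : α → ℝ} {s : α}
    (hs : s ∈ U) : μ s ≤ Real.sqrt (∑ t ∈ U, μ t ^ 2) :=
  Real.le_sqrt_of_sq_le (single_le_sum (fun t _ => sq_nonneg (μ t)) hs)

open scoped Classical in
theorem stmt_4_general {α : Type*} (T : Finset α) (μ : α → ℝ) (θ : ℝ)
    (hμ : ∀ t ∈ T, 0 ≤ μ t) (hθ0 : 0 < θ) :
    ∀ t ∈ T \ (T.filter fun s =>
        (1 - θ) * Real.sqrt (∑ t' ∈ T, μ t' ^ 2) / T.card ≤ μ s),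
      μ t ≤ Real.sqrt (∑ t' ∈ T.filter (fun s =>
        (1 - θ) * Real.sqrt (∑ t'' ∈ T, μ t'' ^ 2) / T.card ≤ μ s), μ t' ^ 2) := by
  intro t ht
  have htT := (mem_sdiff.mp ht).1
  obtain ⟨tₘ, htₘ, hmax⟩ := T.exists_max_image μ ⟨t, htT⟩
  have hcard : (0 : ℝ) < #T := by exact_mod_cast card_pos.mpr ⟨t, htT⟩
  have htₘM : tₘ ∈ T.filter fun s => (1 - θ) * Real.sqrt (∑ t' ∈ T, μ t' ^ 2) / #T ≤ μ s := by
    refine mem_filter.mpr ⟨htₘ, (div_le_iff₀' hcard).mpr ?_⟩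
    calc (1 - θ) * Real.sqrt (∑ t' ∈ T, μ t' ^ 2)
        ≤ Real.sqrt (∑ t' ∈ T, μ t' ^ 2) := mul_le_of_le_one_left (Real.sqrt_nonneg _) (by linarith)
      _ ≤ #T * μ tₘ := sqrt_sum_sq_le_card_mul hμ hmax
  exact (hmax t htT).trans (le_sqrt_sum_sq_of_mem htₘM)

open scoped Classical in
/-- The equidistribution criterion set `M := {t ∈ T : μ(t) ≥ (1-θ) μ(T)/#T}` satisfies the
general marking criterion with `M(x) = x`, provided `μ(T) > 0`. -/
theorem stmt_4 {α : Type*} (T : Finset α) (hT : T.Nonempty) (μ : α → ℝ) (θ : ℝ)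
    (hμ : ∀ t ∈ T, 0 ≤ μ t) (hθ0 : 0 < θ) (hθ1 : θ ≤ 1)
    (hpos : 0 < Real.sqrt (∑ t ∈ T, μ t ^ 2)) :
    ∀ t ∈ T \ (T.filter fun s =>
        (1 - θ) * Real.sqrt (∑ t' ∈ T, μ t' ^ 2) / T.card ≤ μ s),
      μ t ≤ Real.sqrt (∑ t' ∈ T.filter (fun s =>
        (1 - θ) * Real.sqrt (∑ t'' ∈ T, μ t'' ^ 2) / T.card ≤ μ s), μ t' ^ 2) :=
  stmt_4_general T μ θ hμ hθ0
end

section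
/- Let (η_ℓ), (ζ_ℓ) be sequences of nonnegative reals bounded by C_est, let M be a quasi-monotone function (M(s) ≤ C_mon M(t) for s ≤ t) continuous at 0 with M(0)=0, and suppose on each level ℓ the marked set M_ℓ contains a set M_ℓ^ξ with max_{T∈T_ℓ\M_ℓ^ξ} ξ_ℓ(T) ≤ M(ξ_ℓ(M_ℓ^ξ)) for some ξ ∈ {η, ζ}. Then [max_{T∈T_ℓ\M_ℓ} η_ℓ(T)]·[max_{T∈T_ℓ\M_ℓ} ζ_ℓ(T)] ≤ C_est C_mon max{M(η_ℓ(M_ℓ)), M(ζ_ℓ(M_ℓ))}. -/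
/-! The estimator `ξ` that was marked is small off `Mset`: the marking criterion on `Mξ ⊆ Mset`
and quasi-monotonicity give `ξ t ≤ C_mon M(ξ(Mset))` there. The other estimator is bounded
pointwise by its global value, hence by `C_est`, and the product of the two bounds is the claim. -/

open Finset

lemma le_sqrt_sum_sq_of_mem {α : Type*} {S : Finset α} {x : α} (f : α → ℝ) (hx : x ∈ S) :
    f x ≤ √(∑ t ∈ S, f t ^ 2) :=
  (le_abs_self _).trans <|
    Real.abs_le_sqrt <| single_le_sum (f := fun t => f t ^ 2) (fun t _ => sq_nonneg (f t)) hx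

lemma sqrt_sum_sq_le_of_subset {α : Type*} {S S' : Finset α} (f : α → ℝ) (h : S ⊆ S') :
    √(∑ t ∈ S, f t ^ 2) ≤ √(∑ t ∈ S', f t ^ 2) :=
  Real.sqrt_le_sqrt <| sum_le_sum_of_subset_of_nonneg h fun t _ _ => sq_nonneg (f t)

lemma le_mul_of_marking_of_subset {α : Type*} [DecidableEq α] {T M Mξ : Finset α}
    {ξ : α → ℝ} {Mfun : ℝ → ℝ} {C_mon : ℝ} (hMξ : Mξ ⊆ M)
    (hmono : ∀ s t : ℝ, 0 ≤ s → s ≤ t → Mfun s ≤ C_mon * Mfun t)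
    (hmark : ∀ t ∈ T \ Mξ, ξ t ≤ Mfun √(∑ t' ∈ Mξ, ξ t' ^ 2)) :
    ∀ t ∈ T \ M, ξ t ≤ C_mon * Mfun √(∑ t' ∈ M, ξ t' ^ 2) := fun t ht =>
  (hmark t (sdiff_subset_sdiff le_rfl hMξ ht)).trans <|
    hmono _ _ (Real.sqrt_nonneg _) (sqrt_sum_sq_le_of_subset ξ hMξ)

lemma mul_le_max_of_marking {α : Type*} [DecidableEq α] {T M : Finset α} {η ζ : α → ℝ}
    {Mfun : ℝ → ℝ} {C_est C_mon : ℝ} {t t' : α}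
    (hη : ∀ t, 0 ≤ η t) (hζ : ∀ t, 0 ≤ ζ t) (hCmon : 0 ≤ C_mon)
    (hζC : √(∑ s ∈ T, ζ s ^ 2) ≤ C_est)
    (hmark : ∀ t ∈ T \ M, η t ≤ C_mon * Mfun √(∑ s ∈ M, η s ^ 2))
    (ht : t ∈ T \ M) (ht' : t' ∈ T) :
    η t * ζ t' ≤ C_est * C_mon *
      max (Mfun √(∑ s ∈ M, η s ^ 2)) (Mfun √(∑ s ∈ M, ζ s ^ 2)) := by
  have hηt : η t ≤ C_mon * max (Mfun √(∑ s ∈ M, η s ^ 2)) (Mfun √(∑ s ∈ M, ζ s ^ 2)) :=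
    (hmark t ht).trans (mul_le_mul_of_nonneg_left (le_max_left _ _) hCmon)
  have hζt' : ζ t' ≤ C_est := (le_sqrt_sum_sq_of_mem ζ ht').trans hζC
  calc η t * ζ t'
      ≤ C_mon * max (Mfun √(∑ s ∈ M, η s ^ 2)) (Mfun √(∑ s ∈ M, ζ s ^ 2)) * C_est :=
        mul_le_mul_of_nonneg hηt hζt' (hη t) ((hζ t').trans hζt')
    _ = _ := by ring

theorem stmt_6_general {α : Type*} [DecidableEq α] (Tfin Mset Mξ : Finset α) (η ζ ξ : α → ℝ)
    (Mfun : ℝ → ℝ) (C_est C_mon : ℝ)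
    (hη : ∀ t, 0 ≤ η t) (hζ : ∀ t, 0 ≤ ζ t)
    (hξ : ξ = η ∨ ξ = ζ)
    (hMξ : Mξ ⊆ Mset)
    (hbound : Real.sqrt (∑ t ∈ Tfin, η t ^ 2) + Real.sqrt (∑ t ∈ Tfin, ζ t ^ 2) ≤ C_est)
    (hmono : ∀ s t : ℝ, 0 ≤ s → s ≤ t → Mfun s ≤ C_mon * Mfun t)
    (hCmon : 0 < C_mon)
    (hmark : ∀ t ∈ Tfin \ Mξ, ξ t ≤ Mfun (Real.sqrt (∑ t' ∈ Mξ, ξ t' ^ 2))) :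
    ∀ t ∈ Tfin \ Mset, ∀ t' ∈ Tfin \ Mset,
      η t * ζ t' ≤ C_est * C_mon *
        max (Mfun (Real.sqrt (∑ s ∈ Mset, η s ^ 2)))
            (Mfun (Real.sqrt (∑ s ∈ Mset, ζ s ^ 2))) := by
  intro t ht t' ht'
  have hηC : √(∑ s ∈ Tfin, η s ^ 2) ≤ C_est := by
    linarith [Real.sqrt_nonneg (∑ s ∈ Tfin, ζ s ^ 2)]
  have hζC : √(∑ s ∈ Tfin, ζ s ^ 2) ≤ C_est := by
    linarith [Real.sqrt_nonneg (∑ s ∈ Tfin, η s ^ 2)]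
  have hξM := le_mul_of_marking_of_subset hMξ hmono hmark
  rcases hξ with rfl | rfl
  · exact mul_le_max_of_marking hη hζ hCmon.le hζC hξM ht (mem_sdiff.1 ht').1
  · rw [mul_comm (η t), max_comm]
    exact mul_le_max_of_marking hζ hη hCmon.le hηC hξM ht' (mem_sdiff.1 ht).1

/-- "First mark, then combine": if the marked set `M` contains a set `Mξ` satisfying the
general marking criterion for one of the estimators `ξ ∈ {η, ζ}`, the global estimators are
bounded by `C_est`, and `Mfun` is quasi-monotone, then the abstract marking criterion holds
with `V(x,y) = C_est C_mon max{Mfun(x), Mfun(y)}`. -/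
theorem stmt_6 {α : Type*} [DecidableEq α] (Tfin Mset Mξ : Finset α) (η ζ ξ : α → ℝ)
    (Mfun : ℝ → ℝ) (C_est C_mon : ℝ)
    (hη : ∀ t, 0 ≤ η t) (hζ : ∀ t, 0 ≤ ζ t)
    (hξ : ξ = η ∨ ξ = ζ)
    (hMT : Mset ⊆ Tfin) (hMξ : Mξ ⊆ Mset)
    (hbound : Real.sqrt (∑ t ∈ Tfin, η t ^ 2) + Real.sqrt (∑ t ∈ Tfin, ζ t ^ 2) ≤ C_est)
    (hmono : ∀ s t : ℝ, 0 ≤ s → s ≤ t → Mfun s ≤ C_mon * Mfun t)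
    (hMfun : ∀ s, 0 ≤ Mfun s) (hCmon : 0 < C_mon)
    (hmark : ∀ t ∈ Tfin \ Mξ, ξ t ≤ Mfun (Real.sqrt (∑ t' ∈ Mξ, ξ t' ^ 2))) :
    ∀ t ∈ Tfin \ Mset, ∀ t' ∈ Tfin \ Mset,
      η t * ζ t' ≤ C_est * C_mon *
        max (Mfun (Real.sqrt (∑ s ∈ Mset, η s ^ 2)))
            (Mfun (Real.sqrt (∑ s ∈ Mset, ζ s ^ 2))) :=
  stmt_6_general Tfin Mset Mξ η ζ ξ Mfun C_est C_mon hη hζ hξ hMξ hbound hmono hCmon hmark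
end

section
/- Define ρ_ℓ(T)² := η_ℓ(T)² ζ_ℓ² + η_ℓ² ζ_ℓ(T)² for local indicators η_ℓ, ζ_ℓ on a finite set T_ℓ with global values η_ℓ, ζ_ℓ. If M_ℓ ⊆ T_ℓ satisfies max_{T∈T_ℓ\M_ℓ} ρ_ℓ(T) ≤ M(ρ_ℓ(M_ℓ)) for a quasi-monotone M, and sup(η_ℓ + ζ_ℓ) ≤ C_est, then [max_{T∈T_ℓ\M_ℓ} η_ℓ(T)]·[max_{T∈T_ℓ\M_ℓ} ζ_ℓ(T)] ≤ C_mon M(C_est (η_ℓ(M_ℓ)² + ζ_ℓ(M_ℓ)²)^{1/2}). -/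
/-!
Both factors are controlled by the combined indicator: `η(T) ζ(T') ≤ η(T) ζ ≤ ρ(T)`, since
`ζ(T')` is one term of `ζ`. Marking then gives `ρ(T) ≤ M(ρ(M))`, and because `η, ζ ≤ C_est`
every term of `ρ(M)² = Σ η(T)² ζ² + η² ζ(T)²` is at most `C_est² (η(T)² + ζ(T)²)`;
quasi-monotonicity of `M` concludes.
-/

open Finset

section CombinedEstimator

variable {ι : Type*} (T : Finset ι) (η ζ : ι → ℝ)

/-- The paper's `ρ(t)² = η(t)² ζ² + η² ζ(t)²`, with `η² = Σ_{T} η(s)²` and `ζ² = Σ_{T} ζ(s)²`. -/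
noncomputable def combinedEstimatorSq (t : ι) : ℝ :=
  η t ^ 2 * (∑ s ∈ T, ζ s ^ 2) + (∑ s ∈ T, η s ^ 2) * ζ t ^ 2

lemma abs_le_sqrt_sum_sq {i : ι} (hi : i ∈ T) : |ζ i| ≤ √(∑ s ∈ T, ζ s ^ 2) :=
  Real.abs_le_sqrt (single_le_sum (fun s _ => sq_nonneg (ζ s)) hi)

lemma mul_le_sqrt_combinedEstimatorSq (t : ι) {t' : ι} (ht' : t' ∈ T) :
    η t * ζ t' ≤ √(combinedEstimatorSq T η ζ t) :=
  calc η t * ζ t' ≤ |η t| * |ζ t'| := by rw [← abs_mul]; exact le_abs_self _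
    _ ≤ |η t| * √(∑ s ∈ T, ζ s ^ 2) := by gcongr; exact abs_le_sqrt_sum_sq T ζ ht'
    _ = √(η t ^ 2 * ∑ s ∈ T, ζ s ^ 2) := by rw [Real.sqrt_mul (sq_nonneg _), Real.sqrt_sq_eq_abs]
    _ ≤ √(combinedEstimatorSq T η ζ t) := by
      gcongr
      exact le_add_of_nonneg_right (by positivity)

lemma sqrt_sum_combinedEstimatorSq_le (M : Finset ι) {C : ℝ}
    (hC : √(∑ s ∈ T, η s ^ 2) + √(∑ s ∈ T, ζ s ^ 2) ≤ C) :
    √(∑ s ∈ M, combinedEstimatorSq T η ζ s) ≤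
      C * √((∑ s ∈ M, η s ^ 2) + ∑ s ∈ M, ζ s ^ 2) := by
  have hC₀ : 0 ≤ C := le_trans (by positivity) hC
  have hη : ∑ s ∈ T, η s ^ 2 ≤ C ^ 2 :=
    (Real.sqrt_le_left hC₀).1 (le_trans (le_add_of_nonneg_right (by positivity)) hC)
  have hζ : ∑ s ∈ T, ζ s ^ 2 ≤ C ^ 2 :=
    (Real.sqrt_le_left hC₀).1 (le_trans (le_add_of_nonneg_left (by positivity)) hC)
  have hsum : ∑ s ∈ M, combinedEstimatorSq T η ζ s ≤
      C ^ 2 * ((∑ s ∈ M, η s ^ 2) + ∑ s ∈ M, ζ s ^ 2) := by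
    rw [mul_add, mul_sum, mul_sum, ← sum_add_distrib]
    refine sum_le_sum fun s _ => ?_
    unfold combinedEstimatorSq
    nlinarith [sq_nonneg (η s), sq_nonneg (ζ s)]
  calc √(∑ s ∈ M, combinedEstimatorSq T η ζ s)
      ≤ √(C ^ 2 * ((∑ s ∈ M, η s ^ 2) + ∑ s ∈ M, ζ s ^ 2)) := Real.sqrt_le_sqrt hsum
    _ = C * √((∑ s ∈ M, η s ^ 2) + ∑ s ∈ M, ζ s ^ 2) := by
      rw [Real.sqrt_mul (sq_nonneg _), Real.sqrt_sq hC₀]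

end CombinedEstimator

theorem stmt_7_general {α : Type*} [DecidableEq α] (Tfin Mset : Finset α) (η ζ : α → ℝ)
    (Mfun : ℝ → ℝ) (C_est C_mon : ℝ)
    (hbound : Real.sqrt (∑ t ∈ Tfin, η t ^ 2) + Real.sqrt (∑ t ∈ Tfin, ζ t ^ 2) ≤ C_est)
    (hmono : ∀ s t : ℝ, 0 ≤ s → s ≤ t → Mfun s ≤ C_mon * Mfun t)
    (hmark : ∀ t ∈ Tfin \ Mset,
      Real.sqrt (η t ^ 2 * (∑ s ∈ Tfin, ζ s ^ 2) + (∑ s ∈ Tfin, η s ^ 2) * ζ t ^ 2) ≤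
        Mfun (Real.sqrt (∑ s ∈ Mset,
          (η s ^ 2 * (∑ r ∈ Tfin, ζ r ^ 2) + (∑ r ∈ Tfin, η r ^ 2) * ζ s ^ 2)))) :
    ∀ t ∈ Tfin \ Mset, ∀ t' ∈ Tfin \ Mset,
      η t * ζ t' ≤ C_mon *
        Mfun (C_est * Real.sqrt ((∑ s ∈ Mset, η s ^ 2) + (∑ s ∈ Mset, ζ s ^ 2))) := by
  intro t ht t' ht'
  calc η t * ζ t' ≤ √(combinedEstimatorSq Tfin η ζ t) :=
        mul_le_sqrt_combinedEstimatorSq Tfin η ζ t (mem_sdiff.1 ht').1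
    _ ≤ Mfun √(∑ s ∈ Mset, combinedEstimatorSq Tfin η ζ s) := hmark t ht
    _ ≤ _ := hmono _ _ (Real.sqrt_nonneg _)
        (sqrt_sum_combinedEstimatorSq_le Tfin η ζ Mset hbound)

/-- "First combine, then mark": with the weighted indicator
`ρ(T)² := η(T)² ζ² + η² ζ(T)²`, if `M` satisfies the general marking criterion for `ρ`
with a quasi-monotone `Mfun`, and the global estimators are bounded by `C_est`, then the
abstract marking criterion holds with
`V(x,y) = C_mon Mfun(C_est (x² + y²)^{1/2})`. -/
theorem stmt_7 {α : Type*} [DecidableEq α] (Tfin Mset : Finset α) (η ζ : α → ℝ)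
    (Mfun : ℝ → ℝ) (C_est C_mon : ℝ)
    (hη : ∀ t, 0 ≤ η t) (hζ : ∀ t, 0 ≤ ζ t)
    (hMT : Mset ⊆ Tfin)
    (hbound : Real.sqrt (∑ t ∈ Tfin, η t ^ 2) + Real.sqrt (∑ t ∈ Tfin, ζ t ^ 2) ≤ C_est)
    (hmono : ∀ s t : ℝ, 0 ≤ s → s ≤ t → Mfun s ≤ C_mon * Mfun t)
    (hMfun : ∀ s, 0 ≤ Mfun s) (hCmon : 0 < C_mon)
    (hmark : ∀ t ∈ Tfin \ Mset,
      Real.sqrt (η t ^ 2 * (∑ s ∈ Tfin, ζ s ^ 2) + (∑ s ∈ Tfin, η s ^ 2) * ζ t ^ 2) ≤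
        Mfun (Real.sqrt (∑ s ∈ Mset,
          (η s ^ 2 * (∑ r ∈ Tfin, ζ r ^ 2) + (∑ r ∈ Tfin, η r ^ 2) * ζ s ^ 2)))) :
    ∀ t ∈ Tfin \ Mset, ∀ t' ∈ Tfin \ Mset,
      η t * ζ t' ≤ C_mon *
        Mfun (C_est * Real.sqrt ((∑ s ∈ Mset, η s ^ 2) + (∑ s ∈ Mset, ζ s ^ 2))) :=
  stmt_7_general Tfin Mset η ζ Mfun C_est C_mon hbound hmono hmark
end

section
/- Suppose the estimators satisfy stability (B1) and reduction (B2) with a function S continuous at (0,0), S(0,0)=0, and bounded on compact sets, and suppose a-priori convergence holds: ‖u_∞ − u_ℓ‖ → 0 and ‖z_∞ − z_ℓ‖ → 0. Then the error estimator is uniformly bounded: sup_ℓ ξ_ℓ < ∞. -/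
/-!
Compare every level `ℓ` with the initial one: (B1) and (B2) with `k = 0` bound the estimator on
`T ℓ` by `ξ 0` and `S ‖u ℓ - u 0‖ ‖z ℓ - z 0‖`. Convergent sequences are bounded, so these arguments
of `S` stay in a compact set, on which `S` is bounded.
-/

open Finset

theorem exists_forall_le_of_isBounded_range {ι E : Type*} [PseudoMetricSpace E] [ProperSpace E]
    {f : E → ℝ} (hf : ∀ K : Set E, IsCompact K → ∃ C, ∀ p ∈ K, f p ≤ C) {p : ι → E}
    (hp : Bornology.IsBounded (Set.range p)) : ∃ C, ∀ n, f (p n) ≤ C := by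
  obtain ⟨C, hC⟩ := hf _ hp.isCompact_closure
  exact ⟨C, fun n => hC _ (subset_closure (Set.mem_range_self n))⟩

section StabilityReduction

variable {α : Type*} [DecidableEq α] {s s' : Finset α} {f g : α → ℝ} {σ : ℝ}

theorem sum_sq_inter_le_of_stability
    (hstab : √(∑ t ∈ s ∩ s', f t ^ 2) ≤ √(∑ t ∈ s ∩ s', g t ^ 2) + σ) :
    ∑ t ∈ s ∩ s', f t ^ 2 ≤ (√(∑ t ∈ s', g t ^ 2) + σ) ^ 2 := by
  have hle : √(∑ t ∈ s ∩ s', f t ^ 2) ≤ √(∑ t ∈ s', g t ^ 2) + σ :=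
    hstab.trans (add_le_add_left (Real.sqrt_le_sqrt
      (sum_le_sum_of_subset_of_nonneg inter_subset_right fun _ _ _ => sq_nonneg _)) σ)
  exact (Real.sqrt_le_left ((Real.sqrt_nonneg _).trans hle)).mp hle

theorem sum_sq_sdiff_le_of_reduction {q : ℝ} (hq : q ≤ 1)
    (hred : ∑ t ∈ s \ s', f t ^ 2 ≤ q * ∑ t ∈ s' \ s, g t ^ 2 + σ ^ 2) :
    ∑ t ∈ s \ s', f t ^ 2 ≤ ∑ t ∈ s', g t ^ 2 + σ ^ 2 := by
  have hnonneg : 0 ≤ ∑ t ∈ s' \ s, g t ^ 2 := sum_nonneg fun _ _ => sq_nonneg _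
  have hsub : ∑ t ∈ s' \ s, g t ^ 2 ≤ ∑ t ∈ s', g t ^ 2 :=
    sum_le_sum_of_subset_of_nonneg sdiff_subset fun _ _ _ => sq_nonneg _
  linarith [mul_le_of_le_one_left hnonneg hq]

theorem sum_sq_le_of_stability_of_reduction {q : ℝ} (hq : q ≤ 1)
    (hstab : √(∑ t ∈ s ∩ s', f t ^ 2) ≤ √(∑ t ∈ s ∩ s', g t ^ 2) + σ)
    (hred : ∑ t ∈ s \ s', f t ^ 2 ≤ q * ∑ t ∈ s' \ s, g t ^ 2 + σ ^ 2) :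
    ∑ t ∈ s, f t ^ 2 ≤ (√(∑ t ∈ s', g t ^ 2) + σ) ^ 2 + (∑ t ∈ s', g t ^ 2 + σ ^ 2) := by
  rw [← sum_inter_add_sum_sdiff s s']
  exact add_le_add (sum_sq_inter_le_of_stability hstab) (sum_sq_sdiff_le_of_reduction hq hred)

end StabilityReduction

theorem stmt_9_general {α : Type*} [DecidableEq α] {X : Type*} [NormedAddCommGroup X]
    (T : ℕ → Finset α) (ξ : ℕ → α → ℝ) (u z : ℕ → X) (uinf zinf : X)
    (S : ℝ → ℝ → ℝ) (q : ℝ) (hq1 : q < 1)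
    (hSnonneg : ∀ x y, 0 ≤ S x y)
    (hSbdd : ∀ K : Set (ℝ × ℝ), IsCompact K → ∃ C, ∀ p ∈ K, S p.1 p.2 ≤ C)
    (hstab : ∀ k ℓ, k ≤ ℓ →
      Real.sqrt (∑ t ∈ T ℓ ∩ T k, ξ ℓ t ^ 2) ≤
        Real.sqrt (∑ t ∈ T ℓ ∩ T k, ξ k t ^ 2) + S ‖u ℓ - u k‖ ‖z ℓ - z k‖)
    (hred : ∀ k ℓ, k ≤ ℓ →
      ∑ t ∈ T ℓ \ T k, ξ ℓ t ^ 2 ≤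
        q * ∑ t ∈ T k \ T ℓ, ξ k t ^ 2 + (S ‖u ℓ - u k‖ ‖z ℓ - z k‖) ^ 2)
    (hu : Filter.Tendsto u Filter.atTop (nhds uinf))
    (hz : Filter.Tendsto z Filter.atTop (nhds zinf)) :
    ∃ C, ∀ ℓ, Real.sqrt (∑ t ∈ T ℓ, ξ ℓ t ^ 2) ≤ C := by
  obtain ⟨C, hC⟩ := exists_forall_le_of_isBounded_range hSbdd <|
    Metric.isBounded_range_of_tendsto _ <|
      ((hu.sub_const (u 0)).norm).prodMk_nhds ((hz.sub_const (z 0)).norm)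
  set E₀ := ∑ t ∈ T 0, ξ 0 t ^ 2
  refine ⟨√((√E₀ + C) ^ 2 + (E₀ + C ^ 2)), fun ℓ => Real.sqrt_le_sqrt ?_⟩
  have hσ := hSnonneg ‖u ℓ - u 0‖ ‖z ℓ - z 0‖
  calc ∑ t ∈ T ℓ, ξ ℓ t ^ 2
      ≤ (√E₀ + S ‖u ℓ - u 0‖ ‖z ℓ - z 0‖) ^ 2 + (E₀ + S ‖u ℓ - u 0‖ ‖z ℓ - z 0‖ ^ 2) :=
        sum_sq_le_of_stability_of_reduction hq1.le (hstab 0 ℓ ℓ.zero_le) (hred 0 ℓ ℓ.zero_le)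
    _ ≤ (√E₀ + C) ^ 2 + (E₀ + C ^ 2) := by
        have hσC := hC ℓ
        gcongr

/-- Uniform estimator boundedness: under stability (B1), reduction (B2) with a function `S`
continuous at `(0,0)` with `S(0,0)=0` and bounded on compact sets, and a-priori convergence
of the discrete solutions, the global error estimator is uniformly bounded. -/
theorem stmt_9 {α : Type*} [DecidableEq α] {X : Type*} [NormedAddCommGroup X]
    (T : ℕ → Finset α) (ξ : ℕ → α → ℝ) (u z : ℕ → X) (uinf zinf : X)
    (S : ℝ → ℝ → ℝ) (q : ℝ) (hq0 : 0 < q) (hq1 : q < 1)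
    (hξ : ∀ ℓ t, 0 ≤ ξ ℓ t)
    (hScont : ContinuousAt (fun p : ℝ × ℝ => S p.1 p.2) (0, 0))
    (hS0 : S 0 0 = 0)
    (hSnonneg : ∀ x y, 0 ≤ S x y)
    (hSbdd : ∀ K : Set (ℝ × ℝ), IsCompact K → ∃ C, ∀ p ∈ K, S p.1 p.2 ≤ C)
    (hstab : ∀ k ℓ, k ≤ ℓ →
      Real.sqrt (∑ t ∈ T ℓ ∩ T k, ξ ℓ t ^ 2) ≤
        Real.sqrt (∑ t ∈ T ℓ ∩ T k, ξ k t ^ 2) + S ‖u ℓ - u k‖ ‖z ℓ - z k‖)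
    (hred : ∀ k ℓ, k ≤ ℓ →
      ∑ t ∈ T ℓ \ T k, ξ ℓ t ^ 2 ≤
        q * ∑ t ∈ T k \ T ℓ, ξ k t ^ 2 + (S ‖u ℓ - u k‖ ‖z ℓ - z k‖) ^ 2)
    (hu : Filter.Tendsto u Filter.atTop (nhds uinf))
    (hz : Filter.Tendsto z Filter.atTop (nhds zinf)) :
    ∃ C, ∀ ℓ, Real.sqrt (∑ t ∈ T ℓ, ξ ℓ t ^ 2) ≤ C :=
  stmt_9_general T ξ u z uinf zinf S q hq1 hSnonneg hSbdd hstab hred hu hz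
end

section
/- Let (T_ℓ) be a sequence of meshes with T_{ℓ+1} a refinement of T_ℓ (marked elements are refined; every element is the union of its children), and let T_∞ := ∪_{ℓ'} ∩_{ℓ≥ℓ'} T_ℓ be the set of never-again-refined elements. Then there exists a subsequence (T_{ℓ_k}) such that T_{ℓ_k} ∩ T_{ℓ_{k+n}} = T_{ℓ_k} ∩ T_∞ for all k ∈ ℕ₀ and n ∈ ℕ. -/
/-!
For a fixed element `t`, the times at which `t` lies in the mesh form an order-connected set of
indices, since a refined element never returns. Such a set is eventually full or eventually empty,
so from some index `N t` on, `t ∈ T ℓ` holds exactly when `t ∈ T_∞`. Since each mesh is finite,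
choosing `ℓ_{k+1}` beyond `N t` for all `t ∈ T_{ℓ_k}` gives the subsequence.
-/

open Filter

lemma Nat.ordConnected_setOf_of_never_returns {p : ℕ → Prop}
    (hgone : ∀ k, p k → ¬p (k + 1) → ∀ ℓ, k < ℓ → ¬p ℓ) : {m | p m}.OrdConnected := by
  refine ⟨fun a ha b hb c hc => ?_⟩
  induction c, hc.1 using Nat.le_induction with
  | base => exact ha
  | succ c hac ih =>
    by_contra hnot
    exact hgone c (ih ⟨hac, Nat.le_of_succ_le hc.2⟩) hnot b hc.2 hb

lemma Set.OrdConnected.eventually_mem_iff_eventually_mem {β : Type*} [SemilatticeSup β]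
    [Nonempty β] {s : Set β} (hs : s.OrdConnected) :
    ∀ᶠ m in atTop, (m ∈ s ↔ ∀ᶠ ℓ in atTop, ℓ ∈ s) := by
  by_cases hev : ∀ᶠ ℓ in atTop, ℓ ∈ s
  · exact hev.mono fun m hm => iff_of_true hm hev
  rcases s.eq_empty_or_nonempty with rfl | ⟨a, ha⟩
  · exact Eventually.of_forall fun m => iff_of_false (Set.notMem_empty m) hev
  obtain ⟨c, hac, hc⟩ := frequently_atTop.1 (not_eventually.1 hev) a
  refine eventually_atTop.2 ⟨c, fun m hcm => iff_of_false (fun hm => ?_) hev⟩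
  exact hc (hs.out ha hm ⟨hac, hcm⟩)

lemma exists_strictMono_le_succ (f : ℕ → ℕ) :
    ∃ φ : ℕ → ℕ, StrictMono φ ∧ ∀ k, f (φ k) ≤ φ (k + 1) := by
  let φ : ℕ → ℕ := fun k => Nat.rec 0 (fun _ p => max (p + 1) (f p)) k
  have hstep : ∀ k, φ (k + 1) = max (φ k + 1) (f (φ k)) := fun _ => rfl
  refine ⟨φ, strictMono_nat_of_lt_succ fun k => ?_, fun k => ?_⟩
  · rw [hstep]; exact Nat.lt_of_lt_of_le (Nat.lt_succ_self _) (le_max_left _ _)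
  · rw [hstep]; exact le_max_right _ _

/-- Subsequence lemma: for a sequence of meshes in which refined elements never reappear,
there is a subsequence `(T_{ℓ_k})` with
`T_{ℓ_k} ∩ T_{ℓ_{k+n}} = T_{ℓ_k} ∩ T_∞` for all `k` and all `n ≥ 1`, where `T_∞` is the
set of elements that are never again refined. -/
theorem stmt_10 {α : Type*} (T : ℕ → Finset α)
    (hgone : ∀ t k, t ∈ T k → t ∉ T (k + 1) → ∀ ℓ, k < ℓ → t ∉ T ℓ) :
    ∃ φ : ℕ → ℕ, StrictMono φ ∧
      ∀ k n, 0 < n →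
        (↑(T (φ k)) ∩ ↑(T (φ (k + n))) : Set α) =
          ↑(T (φ k)) ∩ {t | ∃ ℓ', ∀ ℓ, ℓ' ≤ ℓ → t ∈ T ℓ} := by
  have hconn (t : α) : {m | t ∈ T m}.OrdConnected :=
    Nat.ordConnected_setOf_of_never_returns (hgone t)
  choose N hN using fun t => eventually_atTop.1 (hconn t).eventually_mem_iff_eventually_mem
  obtain ⟨φ, hφ, hstep⟩ := exists_strictMono_le_succ fun p => (T p).sup N
  refine ⟨φ, hφ, fun k n hn => Set.ext fun t => ?_⟩
  simp only [Set.mem_inter_iff, Finset.mem_coe, Set.mem_ofPred_eq]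
  refine and_congr_right fun ht => (hN t _ ?_).trans eventually_atTop
  calc N t ≤ (T (φ k)).sup N := Finset.le_sup ht
    _ ≤ φ (k + 1) := hstep k
    _ ≤ φ (k + n) := hφ.monotone (by omega)
end

section
/- Under the assumptions of the subsequence lemma (T_{ℓ_k} ∩ T_{ℓ_{k+n}} = T_{ℓ_k} ∩ T_∞ for all k, n) together with estimator reduction (B2) and a-priori convergence of the discrete solutions, one has ξ_{ℓ_k}(T_{ℓ_k} \ T_{ℓ_{k+1}}) → 0 as k → ∞; in particular ξ_{ℓ_k}(M_{ℓ_k}) → 0. -/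
open Filter

/-- Quasi-contraction lemma: `a (n+1) ≤ q * a n + b n` with `b → 0`, `0 ≤ q < 1`,
`a ≥ 0` implies `a → 0`. -/
lemma quasi_contraction {a b : ℕ → ℝ} {q : ℝ} (hq0 : 0 ≤ q) (hq1 : q < 1)
    (ha : ∀ n, 0 ≤ a n) (hb : Tendsto b atTop (nhds 0))
    (hrec : ∀ n, a (n + 1) ≤ q * a n + b n) : Tendsto a atTop (nhds 0) := by
  rw [Metric.tendsto_atTop]
  intro ε hε
  have hδ : 0 < (1 - q) * (ε / 2) := by
    have : 0 < 1 - q := by linarith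
    positivity
  rw [Metric.tendsto_atTop] at hb
  obtain ⟨N, hN⟩ := hb ((1 - q) * (ε / 2)) hδ
  -- induction bound
  have key : ∀ m, a (N + m) ≤ q ^ m * a N + ε / 2 := by
    intro m
    induction m with
    | zero => simp; linarith [ha N, hε]
    | succ m ih =>
        have h1 := hrec (N + m)
        have h2 : b (N + m) < (1 - q) * (ε / 2) := by
          have := hN (N + m) (Nat.le_add_right _ _)
          rw [Real.dist_eq, sub_zero] at this
          exact lt_of_le_of_lt (le_abs_self _) this
        have h3 : q * a (N + m) ≤ q * (q ^ m * a N + ε / 2) :=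
          mul_le_mul_of_nonneg_left ih hq0
        have : a (N + m + 1) ≤ q * (q ^ m * a N + ε / 2) + (1 - q) * (ε / 2) := by
          linarith
        calc a (N + (m + 1)) = a (N + m + 1) := by ring_nf
          _ ≤ q * (q ^ m * a N + ε / 2) + (1 - q) * (ε / 2) := this
          _ = q ^ (m + 1) * a N + ε / 2 := by ring
  -- q^m * a N → 0
  have hpow : Tendsto (fun m => q ^ m * a N) atTop (nhds 0) := by
    simpa using (tendsto_pow_atTop_nhds_zero_of_lt_one hq0 hq1).mul_const (a N)
  rw [Metric.tendsto_atTop] at hpow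
  obtain ⟨M, hM⟩ := hpow (ε / 2) (by linarith)
  refine ⟨N + M, fun n hn => ?_⟩
  have hNn : N ≤ n := le_trans (Nat.le_add_right N M) hn
  obtain ⟨m, rfl⟩ := Nat.exists_eq_add_of_le hNn
  have hMm : M ≤ m := by omega
  have h1 := key m
  have h2 := hM m hMm
  rw [Real.dist_eq, sub_zero] at h2 ⊢
  have h3 : q ^ m * a N < ε / 2 := lt_of_le_of_lt (le_abs_self _) h2
  rw [abs_of_nonneg (ha _)]
  linarith

/-- Along the subsequence of the subsequence lemma, estimator reduction (B2) and a-priori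
convergence yield `ξ_{ℓ_k}(T_{ℓ_k} \ T_{ℓ_{k+1}}) → 0`; in particular
`ξ_{ℓ_k}(M_{ℓ_k}) → 0`. -/
theorem stmt_11 {α : Type*} [DecidableEq α] {X : Type*} [NormedAddCommGroup X]
    (T Mk : ℕ → Finset α) (ξ : ℕ → α → ℝ) (u z : ℕ → X) (uinf zinf : X)
    (S : ℝ → ℝ → ℝ) (q : ℝ) (φ : ℕ → ℕ)
    (hq0 : 0 < q) (hq1 : q < 1)
    (hξ : ∀ ℓ t, 0 ≤ ξ ℓ t)
    (hφ : StrictMono φ)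
    (hsub : ∀ k n, 0 < n →
      (↑(T (φ k)) ∩ ↑(T (φ (k + n))) : Set α) =
        ↑(T (φ k)) ∩ {t | ∃ ℓ', ∀ ℓ, ℓ' ≤ ℓ → t ∈ T ℓ})
    (hgone : ∀ t k, t ∈ T k → t ∉ T (k + 1) → ∀ ℓ, k < ℓ → t ∉ T ℓ)
    (hmark : ∀ ℓ, Mk ℓ ⊆ T ℓ \ T (ℓ + 1))
    (hScont : ContinuousAt (fun p : ℝ × ℝ => S p.1 p.2) (0, 0))
    (hS0 : S 0 0 = 0)
    (hSnonneg : ∀ x y, 0 ≤ S x y)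
    (hred : ∀ k ℓ, k ≤ ℓ →
      ∑ t ∈ T ℓ \ T k, ξ ℓ t ^ 2 ≤
        q * ∑ t ∈ T k \ T ℓ, ξ k t ^ 2 + (S ‖u ℓ - u k‖ ‖z ℓ - z k‖) ^ 2)
    (hu : Filter.Tendsto u Filter.atTop (nhds uinf))
    (hz : Filter.Tendsto z Filter.atTop (nhds zinf)) :
    Filter.Tendsto
      (fun k => Real.sqrt (∑ t ∈ T (φ k) \ T (φ (k + 1)), ξ (φ k) t ^ 2))
      Filter.atTop (nhds 0) ∧
    Filter.Tendsto
      (fun k => Real.sqrt (∑ t ∈ Mk (φ k), ξ (φ k) t ^ 2))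
      Filter.atTop (nhds 0) := by
  set a : ℕ → ℝ := fun k => ∑ t ∈ T (φ k) \ T (φ (k + 1)), ξ (φ k) t ^ 2 with ha_def
  set b : ℕ → ℝ := fun k => (S ‖u (φ (k + 1)) - u (φ k)‖ ‖z (φ (k + 1)) - z (φ k)‖) ^ 2
    with hb_def
  have ha_nonneg : ∀ k, 0 ≤ a k := fun k =>
    Finset.sum_nonneg fun t _ => sq_nonneg _
  -- b → 0
  have hb0 : Tendsto b atTop (nhds 0) := by
    have huφ : Tendsto (fun k => u (φ k)) atTop (nhds uinf) :=
      hu.comp (hφ.tendsto_atTop)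
    have huφ' : Tendsto (fun k => u (φ (k + 1))) atTop (nhds uinf) :=
      huφ.comp (tendsto_add_atTop_nat 1)
    have hzφ : Tendsto (fun k => z (φ k)) atTop (nhds zinf) :=
      hz.comp (hφ.tendsto_atTop)
    have hzφ' : Tendsto (fun k => z (φ (k + 1))) atTop (nhds zinf) :=
      hzφ.comp (tendsto_add_atTop_nat 1)
    have hnu : Tendsto (fun k => ‖u (φ (k + 1)) - u (φ k)‖) atTop (nhds 0) := by
      have := (huφ'.sub huφ)
      simpa [Function.comp_def] using (tendsto_norm_zero.comp (by simpa using this))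
    have hnz : Tendsto (fun k => ‖z (φ (k + 1)) - z (φ k)‖) atTop (nhds 0) := by
      have := (hzφ'.sub hzφ)
      simpa [Function.comp_def] using (tendsto_norm_zero.comp (by simpa using this))
    have hpair : Tendsto
        (fun k => ((‖u (φ (k + 1)) - u (φ k)‖ : ℝ), ‖z (φ (k + 1)) - z (φ k)‖))
        atTop (nhds (0, 0)) := hnu.prodMk_nhds hnz
    have hS : Tendsto (fun k => S ‖u (φ (k + 1)) - u (φ k)‖ ‖z (φ (k + 1)) - z (φ k)‖)
        atTop (nhds 0) := by
      have := hScont.tendsto.comp hpair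
      simpa [hS0, Function.comp_def] using this
    simpa [hb_def] using (hS.mul hS).congr (fun k => by ring)
  -- recursion a (k+1) ≤ q * a k + b k
  have hrec : ∀ k, a (k + 1) ≤ q * a k + b k := by
    intro k
    have hsubset : T (φ (k + 1)) \ T (φ (k + 2)) ⊆ T (φ (k + 1)) \ T (φ k) := by
      intro t ht
      rw [Finset.mem_sdiff] at ht ⊢
      refine ⟨ht.1, fun htk => ?_⟩
      have h1 := hsub k 1 one_pos
      have h2 := hsub k 2 two_pos
      have htinf : t ∈ {t | ∃ ℓ', ∀ ℓ, ℓ' ≤ ℓ → t ∈ T ℓ} := by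
        have : t ∈ (↑(T (φ k)) ∩ ↑(T (φ (k + 1))) : Set α) := ⟨htk, ht.1⟩
        rw [h1] at this
        exact this.2
      have : t ∈ (↑(T (φ k)) ∩ ↑(T (φ (k + 2))) : Set α) := by
        rw [h2]; exact ⟨htk, htinf⟩
      exact ht.2 this.2
    have hmono : a (k + 1) ≤ ∑ t ∈ T (φ (k + 1)) \ T (φ k), ξ (φ (k + 1)) t ^ 2 :=
      Finset.sum_le_sum_of_subset_of_nonneg hsubset (fun t _ _ => sq_nonneg _)
    have := hred (φ k) (φ (k + 1)) (hφ (lt_add_one k)).le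
    exact hmono.trans this
  have ha0 : Tendsto a atTop (nhds 0) := quasi_contraction hq0.le hq1 ha_nonneg hb0 hrec
  constructor
  · have := (Real.continuous_sqrt.continuousAt (x := (0:ℝ))).tendsto.comp ha0
    simpa [Real.sqrt_zero, Function.comp_def, ha_def] using this
  · have hMle : ∀ k, ∑ t ∈ Mk (φ k), ξ (φ k) t ^ 2 ≤ a k := by
      intro k
      refine Finset.sum_le_sum_of_subset_of_nonneg ?_ (fun t _ _ => sq_nonneg _)
      intro t ht
      have := hmark (φ k) ht
      rw [Finset.mem_sdiff] at this ⊢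
      refine ⟨this.1, fun h2 => ?_⟩
      exact hgone t (φ k) this.1 this.2 (φ (k + 1)) (hφ (lt_add_one k)) h2
    have hM0 : Tendsto (fun k => ∑ t ∈ Mk (φ k), ξ (φ k) t ^ 2) atTop (nhds 0) :=
      squeeze_zero (fun k => Finset.sum_nonneg fun t _ => sq_nonneg _) hMle ha0
    have := (Real.continuous_sqrt.continuousAt (x := (0:ℝ))).tendsto.comp hM0
    simpa [Real.sqrt_zero, Function.comp_def] using this
end

section
/- Suppose η_ℓ ζ_ℓ ≠ 0 for all ℓ, the estimators satisfy stability (B1) and reduction (B2) with 0 < q_red < 1, the marked sets satisfy the weighted Dörfler criterion 0 < θ ≤ W(η_ℓ(M_ℓ)²/η_ℓ², ζ_ℓ(M_ℓ)²/ζ_ℓ²) with W(x,y) ≤ C_W max{x,y} on [0,1]², marked elements are refined (M_ℓ ⊆ T_ℓ \ T_{ℓ+1}), and a-priori convergence of (u_ℓ), (z_ℓ) holds. Then η_ℓ ζ_ℓ → 0 as ℓ → ∞. -/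
open Filter

private lemma young_ineq (a s δ : ℝ) (ha : 0 ≤ a) (hs : 0 ≤ s) (hδ : 0 < δ) :
    (a + s)^2 ≤ (1+δ)*a^2 + (1+1/δ)*s^2 := by
  have key : δ*a^2 - 2*a*s + (1/δ)*s^2 = (1/δ)*(δ*a-s)^2 := by
    field_simp; ring
  have h0 : 0 ≤ δ*a^2 - 2*a*s + (1/δ)*s^2 := by
    rw [key]; exact mul_nonneg (by positivity) (sq_nonneg _)
  nlinarith [h0]

private lemma aux_step (δ q s Ain A Anew D E' : ℝ)
    (hδ : 0 < δ) (hs : 0 ≤ s) (hA0 : 0 ≤ A) (hAin0 : 0 ≤ Ain)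
    (hsqrt : Real.sqrt A ≤ Real.sqrt Ain + s)
    (hred : Anew ≤ q * D + s^2)
    (hsum : A + Anew = E') :
    E' ≤ (1+δ)*Ain + q*D + (2+1/δ)*s^2 := by
  have h1 : A ≤ (Real.sqrt Ain + s)^2 := by
    calc A = Real.sqrt A ^ 2 := (Real.sq_sqrt hA0).symm
    _ ≤ (Real.sqrt Ain + s)^2 := pow_le_pow_left₀ (Real.sqrt_nonneg _) hsqrt 2
  have h2 : (Real.sqrt Ain + s)^2 ≤ (1+δ)*Ain + (1+1/δ)*s^2 := by
    have := young_ineq (Real.sqrt Ain) s δ (Real.sqrt_nonneg _) hs hδ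
    rwa [Real.sq_sqrt hAin0] at this
  nlinarith [h1, h2, hred]

private lemma prod_step (x' y' x y t κ₁ d c B C2 : ℝ)
    (hx' : 0 ≤ x') (hy' : 0 ≤ y') (hx : 0 ≤ x) (hy : 0 ≤ y) (ht : 0 ≤ t)
    (hc : 0 ≤ c) (hκ₁ : 0 ≤ κ₁) (hκd : κ₁ ≤ d)
    (hxB : x ≤ B) (hyB : y ≤ B) (htC : t ≤ C2)
    (h1 : x' ≤ κ₁ * x + c * t) (h2 : y' ≤ d * y + c * t) :
    x' * y' ≤ (κ₁ * d) * (x * y) + (2*c*d*B + c^2*C2) * t := by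
  have hd : 0 ≤ d := hκ₁.trans hκd
  have hct : 0 ≤ c * t := mul_nonneg hc ht
  have key : x' * y' ≤ (κ₁ * x + c * t) * (d * y + c * t) :=
    mul_le_mul h1 h2 hy' (add_nonneg (mul_nonneg hκ₁ hx) hct)
  have t1 : κ₁ * x ≤ d * B := mul_le_mul hκd hxB hx hd
  have t2 : d * y ≤ d * B := mul_le_mul_of_nonneg_left hyB hd
  have t3 : c * t ≤ c * C2 := mul_le_mul_of_nonneg_left htC hc
  nlinarith [mul_le_mul_of_nonneg_left t1 hct, mul_le_mul_of_nonneg_left t2 hct,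
    mul_le_mul_of_nonneg_left t3 hct, key]

private lemma contract_lemma (a b : ℕ → ℝ) (κ B : ℝ) (hκ0 : 0 ≤ κ) (hκ1 : κ < 1)
    (hB : 0 ≤ B) (ha0 : ∀ n, 0 ≤ a n) (haB : ∀ n, a n ≤ B)
    (hstep : ∀ n, a (n+1) ≤ κ * a n + b n)
    (hb : Filter.Tendsto b Filter.atTop (nhds 0)) :
    Filter.Tendsto a Filter.atTop (nhds 0) := by
  rw [Metric.tendsto_atTop]
  intro ε hε
  have hε4 : 0 < (1-κ)*ε/4 := by
    have : 0 < 1 - κ := by linarith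
    positivity
  obtain ⟨N₁, hN₁⟩ := (Metric.tendsto_atTop.mp hb) _ hε4
  have hinv : ∀ n, a (N₁ + n) ≤ κ^n * B + ε/2 := by
    intro n
    induction n with
    | zero => simpa using (haB N₁).trans (by linarith)
    | succ n ih =>
      have h1 := hstep (N₁ + n)
      have h2 : b (N₁ + n) ≤ (1-κ)*ε/4 := by
        have := hN₁ (N₁+n) (Nat.le_add_right _ _)
        rw [Real.dist_eq, sub_zero] at this
        exact (le_abs_self _).trans this.le
      have h3 : κ * a (N₁ + n) ≤ κ * (κ^n * B + ε/2) :=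
        mul_le_mul_of_nonneg_left ih hκ0
      have hEq : a (N₁ + (n+1)) = a (N₁ + n + 1) := by ring_nf
      rw [hEq]
      have : κ * (κ^n * B + ε/2) = κ^(n+1)*B + κ*ε/2 := by ring
      nlinarith [mul_nonneg hκ0 hε.le]
  obtain ⟨n₀, hn₀⟩ : ∃ n₀, κ^n₀ * B < ε/2 := by
    have h : Filter.Tendsto (fun n => κ^n * B) atTop (nhds 0) := by
      simpa using (tendsto_pow_atTop_nhds_zero_of_lt_one hκ0 hκ1).mul_const B
    exact (h.eventually_lt_const (by linarith)).exists
  refine ⟨N₁ + n₀, fun ℓ hℓ => ?_⟩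
  obtain ⟨n, rfl⟩ : ∃ n, ℓ = N₁ + n := ⟨ℓ - N₁, by omega⟩
  have hn : n₀ ≤ n := by omega
  have hpow : κ^n ≤ κ^n₀ := pow_le_pow_of_le_one hκ0 hκ1.le hn
  have hpB : κ^n * B ≤ κ^n₀ * B := mul_le_mul_of_nonneg_right hpow hB
  rw [Real.dist_eq, sub_zero, abs_of_nonneg (ha0 _)]
  linarith [hinv n]


set_option maxHeartbeats 1000000

/-- Theorem 4.3 (convergence in Setting II under Marking Strategy B): if the estimators
satisfy stability (B1) and reduction (B2), the marked sets satisfy the weighted Dörfler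
criterion with weight `W(x,y) ≤ C_W max{x,y}` on `[0,1]²`, marked elements are refined,
the estimator products are nonzero, and the discrete solutions converge a-priori,
then the goal error estimator product `η_ℓ ζ_ℓ` converges to zero. -/
theorem stmt_12 {α : Type*} [DecidableEq α] {X : Type*} [NormedAddCommGroup X]
    (T Mk : ℕ → Finset α) (η ζ : ℕ → α → ℝ) (u z : ℕ → X) (uinf zinf : X)
    (S : ℝ → ℝ → ℝ) (W : ℝ → ℝ → ℝ) (q θ C_W : ℝ)
    (hq0 : 0 < q) (hq1 : q < 1) (hθ : 0 < θ)
    (hη : ∀ ℓ t, 0 ≤ η ℓ t) (hζ : ∀ ℓ t, 0 ≤ ζ ℓ t)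
    (hmarked : ∀ ℓ, Mk ℓ ⊆ T ℓ \ T (ℓ + 1))
    (hnonzero : ∀ ℓ, 0 < (∑ t ∈ T ℓ, η ℓ t ^ 2) * (∑ t ∈ T ℓ, ζ ℓ t ^ 2))
    (hW : ∀ x y : ℝ, x ∈ Set.Icc (0 : ℝ) 1 → y ∈ Set.Icc (0 : ℝ) 1 → W x y ≤ C_W * max x y)
    (hmark : ∀ ℓ, θ ≤ W ((∑ t ∈ Mk ℓ, η ℓ t ^ 2) / ∑ t ∈ T ℓ, η ℓ t ^ 2)
                        ((∑ t ∈ Mk ℓ, ζ ℓ t ^ 2) / ∑ t ∈ T ℓ, ζ ℓ t ^ 2))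
    (hScont : ContinuousAt (fun p : ℝ × ℝ => S p.1 p.2) (0, 0))
    (hS0 : S 0 0 = 0)
    (hSnonneg : ∀ x y, 0 ≤ S x y)
    (hSbdd : ∀ K : Set (ℝ × ℝ), IsCompact K → ∃ C, ∀ p ∈ K, S p.1 p.2 ≤ C)
    (hstabη : ∀ k ℓ, k ≤ ℓ →
      Real.sqrt (∑ t ∈ T ℓ ∩ T k, η ℓ t ^ 2) ≤
        Real.sqrt (∑ t ∈ T ℓ ∩ T k, η k t ^ 2) + S ‖u ℓ - u k‖ ‖z ℓ - z k‖)
    (hstabζ : ∀ k ℓ, k ≤ ℓ →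
      Real.sqrt (∑ t ∈ T ℓ ∩ T k, ζ ℓ t ^ 2) ≤
        Real.sqrt (∑ t ∈ T ℓ ∩ T k, ζ k t ^ 2) + S ‖u ℓ - u k‖ ‖z ℓ - z k‖)
    (hredη : ∀ k ℓ, k ≤ ℓ →
      ∑ t ∈ T ℓ \ T k, η ℓ t ^ 2 ≤
        q * ∑ t ∈ T k \ T ℓ, η k t ^ 2 + (S ‖u ℓ - u k‖ ‖z ℓ - z k‖) ^ 2)
    (hredζ : ∀ k ℓ, k ≤ ℓ →
      ∑ t ∈ T ℓ \ T k, ζ ℓ t ^ 2 ≤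
        q * ∑ t ∈ T k \ T ℓ, ζ k t ^ 2 + (S ‖u ℓ - u k‖ ‖z ℓ - z k‖) ^ 2)
    (hu : Filter.Tendsto u Filter.atTop (nhds uinf))
    (hz : Filter.Tendsto z Filter.atTop (nhds zinf)) :
    Filter.Tendsto
      (fun ℓ => Real.sqrt (∑ t ∈ T ℓ, η ℓ t ^ 2) * Real.sqrt (∑ t ∈ T ℓ, ζ ℓ t ^ 2))
      Filter.atTop (nhds 0) := by
  classical
  have hEnn : ∀ ℓ, (0:ℝ) ≤ ∑ t ∈ T ℓ, η ℓ t ^ 2 :=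
    fun ℓ => Finset.sum_nonneg fun t _ => sq_nonneg _
  have hFnn : ∀ ℓ, (0:ℝ) ≤ ∑ t ∈ T ℓ, ζ ℓ t ^ 2 :=
    fun ℓ => Finset.sum_nonneg fun t _ => sq_nonneg _
  -- reduce to convergence of the product of squared estimators
  suffices h : Filter.Tendsto
      (fun ℓ => (∑ t ∈ T ℓ, η ℓ t ^ 2) * (∑ t ∈ T ℓ, ζ ℓ t ^ 2)) Filter.atTop (nhds 0) by
    have h2 := (Real.continuous_sqrt.tendsto 0).comp h
    rw [Real.sqrt_zero] at h2
    exact h2.congr fun ℓ => Real.sqrt_mul (hEnn ℓ) _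
  have hEpos : ∀ ℓ, (0:ℝ) < ∑ t ∈ T ℓ, η ℓ t ^ 2 := by
    intro ℓ
    rcases (hEnn ℓ).lt_or_eq with h | h
    · exact h
    · exfalso; have := hnonzero ℓ; rw [← h] at this; simp at this
  have hFpos : ∀ ℓ, (0:ℝ) < ∑ t ∈ T ℓ, ζ ℓ t ^ 2 := by
    intro ℓ
    rcases (hFnn ℓ).lt_or_eq with h | h
    · exact h
    · exfalso; have := hnonzero ℓ; rw [← h] at this; simp at this
  -- the perturbation terms for consecutive steps tend to zero
  have hSl : Filter.Tendsto (fun ℓ => S ‖u (ℓ+1) - u ℓ‖ ‖z (ℓ+1) - z ℓ‖)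
      Filter.atTop (nhds 0) := by
    have hu1 : Filter.Tendsto (fun ℓ => u (ℓ+1) - u ℓ) atTop (nhds 0) := by
      have h := (hu.comp (tendsto_add_atTop_nat 1)).sub hu
      simpa using h
    have hz1 : Filter.Tendsto (fun ℓ => z (ℓ+1) - z ℓ) atTop (nhds 0) := by
      have h := (hz.comp (tendsto_add_atTop_nat 1)).sub hz
      simpa using h
    have hn1 : Filter.Tendsto (fun ℓ => ‖u (ℓ+1) - u ℓ‖) atTop (nhds 0) := by
      simpa using hu1.norm
    have hn2 : Filter.Tendsto (fun ℓ => ‖z (ℓ+1) - z ℓ‖) atTop (nhds 0) := by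
      simpa using hz1.norm
    have hp : Filter.Tendsto (fun ℓ => (‖u (ℓ+1) - u ℓ‖, ‖z (ℓ+1) - z ℓ‖)) atTop
        (nhds ((0:ℝ), (0:ℝ))) := hn1.prodMk_nhds hn2
    have := hScont.tendsto.comp hp
    simpa [hS0, Function.comp_def] using this
  -- a uniform bound for the perturbation terms
  obtain ⟨Ru, hRu⟩ : ∃ R, ∀ n, ‖u n‖ ≤ R := by
    obtain ⟨R, hR⟩ := hu.norm.bddAbove_range
    exact ⟨R, fun n => hR ⟨n, rfl⟩⟩
  obtain ⟨Rz, hRz⟩ : ∃ R, ∀ n, ‖z n‖ ≤ R := by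
    obtain ⟨R, hR⟩ := hz.norm.bddAbove_range
    exact ⟨R, fun n => hR ⟨n, rfl⟩⟩
  obtain ⟨C, hC⟩ := hSbdd (Set.Icc 0 (Ru+Ru) ×ˢ Set.Icc 0 (Rz+Rz))
    (isCompact_Icc.prod isCompact_Icc)
  have hCS : ∀ k ℓ, S ‖u ℓ - u k‖ ‖z ℓ - z k‖ ≤ C := by
    intro k ℓ
    exact hC (_, _) (Set.mk_mem_prod
      (Set.mem_Icc.mpr ⟨norm_nonneg _, (norm_sub_le _ _).trans (add_le_add (hRu ℓ) (hRu k))⟩)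
      (Set.mem_Icc.mpr ⟨norm_nonneg _, (norm_sub_le _ _).trans (add_le_add (hRz ℓ) (hRz k))⟩))
  have hC0 : 0 ≤ C := (hSnonneg _ _).trans (hCS 0 0)
  -- uniform bounds for the estimators
  set Be : ℝ := (Real.sqrt (∑ t ∈ T 0, η 0 t ^ 2) + C)^2 + q * (∑ t ∈ T 0, η 0 t ^ 2) + C^2
    with hBedef
  set Bf : ℝ := (Real.sqrt (∑ t ∈ T 0, ζ 0 t ^ 2) + C)^2 + q * (∑ t ∈ T 0, ζ 0 t ^ 2) + C^2
    with hBfdef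
  have hBe : ∀ ℓ, (∑ t ∈ T ℓ, η ℓ t ^ 2) ≤ Be := by
    intro ℓ
    have hsplit := Finset.sum_inter_add_sum_sdiff (T ℓ) (T 0) (fun t => η ℓ t ^ 2)
    have h1 : Real.sqrt (∑ t ∈ T ℓ ∩ T 0, η ℓ t ^ 2) ≤
        Real.sqrt (∑ t ∈ T 0, η 0 t ^ 2) + C := by
      refine (hstabη 0 ℓ (Nat.zero_le ℓ)).trans (add_le_add ?_ (hCS 0 ℓ))
      exact Real.sqrt_le_sqrt (Finset.sum_le_sum_of_subset_of_nonneg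
        Finset.inter_subset_right (fun t _ _ => sq_nonneg _))
    have h1' : (∑ t ∈ T ℓ ∩ T 0, η ℓ t ^ 2) ≤ (Real.sqrt (∑ t ∈ T 0, η 0 t ^ 2) + C)^2 := by
      calc (∑ t ∈ T ℓ ∩ T 0, η ℓ t ^ 2)
          = Real.sqrt (∑ t ∈ T ℓ ∩ T 0, η ℓ t ^ 2) ^ 2 :=
            (Real.sq_sqrt (Finset.sum_nonneg fun t _ => sq_nonneg _)).symm
        _ ≤ _ := pow_le_pow_left₀ (Real.sqrt_nonneg _) h1 2
    have h2 : (∑ t ∈ T ℓ \ T 0, η ℓ t ^ 2) ≤ q * (∑ t ∈ T 0, η 0 t ^ 2) + C^2 := by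
      refine (hredη 0 ℓ (Nat.zero_le ℓ)).trans (add_le_add ?_ ?_)
      · exact mul_le_mul_of_nonneg_left (Finset.sum_le_sum_of_subset_of_nonneg
          Finset.sdiff_subset (fun t _ _ => sq_nonneg _)) hq0.le
      · exact pow_le_pow_left₀ (hSnonneg _ _) (hCS 0 ℓ) 2
    rw [hBedef]; linarith
  have hBf : ∀ ℓ, (∑ t ∈ T ℓ, ζ ℓ t ^ 2) ≤ Bf := by
    intro ℓ
    have hsplit := Finset.sum_inter_add_sum_sdiff (T ℓ) (T 0) (fun t => ζ ℓ t ^ 2)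
    have h1 : Real.sqrt (∑ t ∈ T ℓ ∩ T 0, ζ ℓ t ^ 2) ≤
        Real.sqrt (∑ t ∈ T 0, ζ 0 t ^ 2) + C := by
      refine (hstabζ 0 ℓ (Nat.zero_le ℓ)).trans (add_le_add ?_ (hCS 0 ℓ))
      exact Real.sqrt_le_sqrt (Finset.sum_le_sum_of_subset_of_nonneg
        Finset.inter_subset_right (fun t _ _ => sq_nonneg _))
    have h1' : (∑ t ∈ T ℓ ∩ T 0, ζ ℓ t ^ 2) ≤ (Real.sqrt (∑ t ∈ T 0, ζ 0 t ^ 2) + C)^2 := by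
      calc (∑ t ∈ T ℓ ∩ T 0, ζ ℓ t ^ 2)
          = Real.sqrt (∑ t ∈ T ℓ ∩ T 0, ζ ℓ t ^ 2) ^ 2 :=
            (Real.sq_sqrt (Finset.sum_nonneg fun t _ => sq_nonneg _)).symm
        _ ≤ _ := pow_le_pow_left₀ (Real.sqrt_nonneg _) h1 2
    have h2 : (∑ t ∈ T ℓ \ T 0, ζ ℓ t ^ 2) ≤ q * (∑ t ∈ T 0, ζ 0 t ^ 2) + C^2 := by
      refine (hredζ 0 ℓ (Nat.zero_le ℓ)).trans (add_le_add ?_ ?_)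
      · exact mul_le_mul_of_nonneg_left (Finset.sum_le_sum_of_subset_of_nonneg
          Finset.sdiff_subset (fun t _ _ => sq_nonneg _)) hq0.le
      · exact pow_le_pow_left₀ (hSnonneg _ _) (hCS 0 ℓ) 2
    rw [hBfdef]; linarith
  set B0 : ℝ := max Be Bf with hB0def
  have hEB : ∀ ℓ, (∑ t ∈ T ℓ, η ℓ t ^ 2) ≤ B0 := fun ℓ => (hBe ℓ).trans (le_max_left _ _)
  have hFB : ∀ ℓ, (∑ t ∈ T ℓ, ζ ℓ t ^ 2) ≤ B0 := fun ℓ => (hBf ℓ).trans (le_max_right _ _)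
  have hB00 : 0 ≤ B0 := (hEnn 0).trans (hEB 0)
  -- Dörfler marking facts
  have hxIcc : ∀ ℓ, ((∑ t ∈ Mk ℓ, η ℓ t ^ 2) / ∑ t ∈ T ℓ, η ℓ t ^ 2) ∈ Set.Icc (0:ℝ) 1 := by
    intro ℓ
    constructor
    · exact div_nonneg (Finset.sum_nonneg fun t _ => sq_nonneg _) (hEnn ℓ)
    · exact (div_le_one (hEpos ℓ)).mpr (Finset.sum_le_sum_of_subset_of_nonneg
        ((hmarked ℓ).trans Finset.sdiff_subset) fun t _ _ => sq_nonneg _)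
  have hyIcc : ∀ ℓ, ((∑ t ∈ Mk ℓ, ζ ℓ t ^ 2) / ∑ t ∈ T ℓ, ζ ℓ t ^ 2) ∈ Set.Icc (0:ℝ) 1 := by
    intro ℓ
    constructor
    · exact div_nonneg (Finset.sum_nonneg fun t _ => sq_nonneg _) (hFnn ℓ)
    · exact (div_le_one (hFpos ℓ)).mpr (Finset.sum_le_sum_of_subset_of_nonneg
        ((hmarked ℓ).trans Finset.sdiff_subset) fun t _ _ => sq_nonneg _)
  have hratθ : ∀ ℓ, θ ≤ C_W * max ((∑ t ∈ Mk ℓ, η ℓ t ^ 2) / ∑ t ∈ T ℓ, η ℓ t ^ 2)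
      ((∑ t ∈ Mk ℓ, ζ ℓ t ^ 2) / ∑ t ∈ T ℓ, ζ ℓ t ^ 2) :=
    fun ℓ => (hmark ℓ).trans (hW _ _ (hxIcc ℓ) (hyIcc ℓ))
  have hCW : 0 < C_W := by
    by_contra h
    push_neg at h
    have h0 := hratθ 0
    have hmax0 : 0 ≤ max ((∑ t ∈ Mk 0, η 0 t ^ 2) / ∑ t ∈ T 0, η 0 t ^ 2)
        ((∑ t ∈ Mk 0, ζ 0 t ^ 2) / ∑ t ∈ T 0, ζ 0 t ^ 2) :=
      le_max_of_le_left (hxIcc 0).1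
    nlinarith [mul_nonneg (neg_nonneg.mpr h) hmax0]
  set μ : ℝ := θ / C_W with hμdef
  have hμpos : 0 < μ := div_pos hθ hCW
  have hμ1 : μ ≤ 1 := by
    rw [hμdef, div_le_one hCW]
    have h := hratθ 0
    have hm : max ((∑ t ∈ Mk 0, η 0 t ^ 2) / ∑ t ∈ T 0, η 0 t ^ 2)
        ((∑ t ∈ Mk 0, ζ 0 t ^ 2) / ∑ t ∈ T 0, ζ 0 t ^ 2) ≤ 1 :=
      max_le (hxIcc 0).2 (hyIcc 0).2
    nlinarith [hCW]
  have hbranch : ∀ ℓ, μ * (∑ t ∈ T ℓ, η ℓ t ^ 2) ≤ (∑ t ∈ T ℓ \ T (ℓ+1), η ℓ t ^ 2) ∨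
      μ * (∑ t ∈ T ℓ, ζ ℓ t ^ 2) ≤ (∑ t ∈ T ℓ \ T (ℓ+1), ζ ℓ t ^ 2) := by
    intro ℓ
    have hmax : μ ≤ max ((∑ t ∈ Mk ℓ, η ℓ t ^ 2) / ∑ t ∈ T ℓ, η ℓ t ^ 2)
        ((∑ t ∈ Mk ℓ, ζ ℓ t ^ 2) / ∑ t ∈ T ℓ, ζ ℓ t ^ 2) := by
      rw [hμdef, div_le_iff₀ hCW]
      linarith [hratθ ℓ]
    rcases le_max_iff.mp hmax with hx | hy
    · left
      have h1 : μ * (∑ t ∈ T ℓ, η ℓ t ^ 2) ≤ ∑ t ∈ Mk ℓ, η ℓ t ^ 2 :=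
        (le_div_iff₀ (hEpos ℓ)).mp hx
      exact h1.trans (Finset.sum_le_sum_of_subset_of_nonneg (hmarked ℓ)
        fun t _ _ => sq_nonneg _)
    · right
      have h1 : μ * (∑ t ∈ T ℓ, ζ ℓ t ^ 2) ≤ ∑ t ∈ Mk ℓ, ζ ℓ t ^ 2 :=
        (le_div_iff₀ (hFpos ℓ)).mp hy
      exact h1.trans (Finset.sum_le_sum_of_subset_of_nonneg (hmarked ℓ)
        fun t _ _ => sq_nonneg _)
  -- constants
  set δ : ℝ := μ * (1-q) / 4 with hδdef
  have hδpos : 0 < δ := by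
    rw [hδdef]
    exact div_pos (mul_pos hμpos (by linarith)) (by norm_num)
  set c : ℝ := 2 + 1/δ with hcdef
  have hc0 : 0 ≤ c := by
    have := one_div_pos.mpr hδpos
    rw [hcdef]; linarith
  set κ₁ : ℝ := (1+δ)*(1-μ) + q*μ with hκ₁def
  have hκ₁0 : 0 ≤ κ₁ := by
    rw [hκ₁def]
    nlinarith [hμ1, hδpos, hq0, hμpos]
  have hκ₁d : κ₁ ≤ 1+δ := by
    rw [hκ₁def]
    nlinarith [hμpos, hq0.le, hδpos, hq1]
  set κ : ℝ := κ₁ * (1+δ) with hκdef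
  have hκ0 : 0 ≤ κ := by
    rw [hκdef]; exact mul_nonneg hκ₁0 (by linarith)
  have hκ1 : κ < 1 := by
    rw [hκdef, hκ₁def, hδdef]
    nlinarith [hμpos, hμ1, hq0, hq1, mul_pos hμpos (show (0:ℝ) < 1-q by linarith),
      sq_nonneg (μ*(1-q)), mul_pos (mul_pos hμpos hμpos) (show (0:ℝ) < 1-q by linarith)]
  set G : ℝ := 2*c*(1+δ)*B0 + c^2*C^2 with hGdef
  -- per-step estimates
  have htotη : ∀ ℓ, (∑ t ∈ T (ℓ+1) ∩ T ℓ, η ℓ t ^ 2) + (∑ t ∈ T ℓ \ T (ℓ+1), η ℓ t ^ 2)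
      = ∑ t ∈ T ℓ, η ℓ t ^ 2 := by
    intro ℓ; rw [Finset.inter_comm]; exact Finset.sum_inter_add_sum_sdiff _ _ _
  have htotζ : ∀ ℓ, (∑ t ∈ T (ℓ+1) ∩ T ℓ, ζ ℓ t ^ 2) + (∑ t ∈ T ℓ \ T (ℓ+1), ζ ℓ t ^ 2)
      = ∑ t ∈ T ℓ, ζ ℓ t ^ 2 := by
    intro ℓ; rw [Finset.inter_comm]; exact Finset.sum_inter_add_sum_sdiff _ _ _
  have hstepη : ∀ ℓ, (∑ t ∈ T (ℓ+1), η (ℓ+1) t ^ 2) ≤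
      (1+δ)*(∑ t ∈ T (ℓ+1) ∩ T ℓ, η ℓ t ^ 2) + q*(∑ t ∈ T ℓ \ T (ℓ+1), η ℓ t ^ 2)
        + c*(S ‖u (ℓ+1) - u ℓ‖ ‖z (ℓ+1) - z ℓ‖)^2 := by
    intro ℓ
    rw [hcdef]
    exact aux_step δ q _ _ _ _ _ _ hδpos (hSnonneg _ _)
      (Finset.sum_nonneg fun t _ => sq_nonneg _) (Finset.sum_nonneg fun t _ => sq_nonneg _)
      (hstabη ℓ (ℓ+1) (Nat.le_succ ℓ)) (hredη ℓ (ℓ+1) (Nat.le_succ ℓ))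
      (Finset.sum_inter_add_sum_sdiff _ _ _)
  have hstepζ : ∀ ℓ, (∑ t ∈ T (ℓ+1), ζ (ℓ+1) t ^ 2) ≤
      (1+δ)*(∑ t ∈ T (ℓ+1) ∩ T ℓ, ζ ℓ t ^ 2) + q*(∑ t ∈ T ℓ \ T (ℓ+1), ζ ℓ t ^ 2)
        + c*(S ‖u (ℓ+1) - u ℓ‖ ‖z (ℓ+1) - z ℓ‖)^2 := by
    intro ℓ
    rw [hcdef]
    exact aux_step δ q _ _ _ _ _ _ hδpos (hSnonneg _ _)
      (Finset.sum_nonneg fun t _ => sq_nonneg _) (Finset.sum_nonneg fun t _ => sq_nonneg _)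
      (hstabζ ℓ (ℓ+1) (Nat.le_succ ℓ)) (hredζ ℓ (ℓ+1) (Nat.le_succ ℓ))
      (Finset.sum_inter_add_sum_sdiff _ _ _)
  have hgenη : ∀ ℓ, (∑ t ∈ T (ℓ+1), η (ℓ+1) t ^ 2) ≤
      (1+δ)*(∑ t ∈ T ℓ, η ℓ t ^ 2) + c*(S ‖u (ℓ+1) - u ℓ‖ ‖z (ℓ+1) - z ℓ‖)^2 := by
    intro ℓ
    have h := hstepη ℓ
    have hAin : (∑ t ∈ T (ℓ+1) ∩ T ℓ, η ℓ t ^ 2)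
        = (∑ t ∈ T ℓ, η ℓ t ^ 2) - (∑ t ∈ T ℓ \ T (ℓ+1), η ℓ t ^ 2) := by
      linarith [htotη ℓ]
    rw [hAin] at h
    have hD0 : (0:ℝ) ≤ ∑ t ∈ T ℓ \ T (ℓ+1), η ℓ t ^ 2 :=
      Finset.sum_nonneg fun t _ => sq_nonneg _
    nlinarith [mul_nonneg (show (0:ℝ) ≤ 1+δ-q by linarith) hD0]
  have hgenζ : ∀ ℓ, (∑ t ∈ T (ℓ+1), ζ (ℓ+1) t ^ 2) ≤
      (1+δ)*(∑ t ∈ T ℓ, ζ ℓ t ^ 2) + c*(S ‖u (ℓ+1) - u ℓ‖ ‖z (ℓ+1) - z ℓ‖)^2 := by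
    intro ℓ
    have h := hstepζ ℓ
    have hAin : (∑ t ∈ T (ℓ+1) ∩ T ℓ, ζ ℓ t ^ 2)
        = (∑ t ∈ T ℓ, ζ ℓ t ^ 2) - (∑ t ∈ T ℓ \ T (ℓ+1), ζ ℓ t ^ 2) := by
      linarith [htotζ ℓ]
    rw [hAin] at h
    have hD0 : (0:ℝ) ≤ ∑ t ∈ T ℓ \ T (ℓ+1), ζ ℓ t ^ 2 :=
      Finset.sum_nonneg fun t _ => sq_nonneg _
    nlinarith [mul_nonneg (show (0:ℝ) ≤ 1+δ-q by linarith) hD0]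
  have hcaseη : ∀ ℓ, μ * (∑ t ∈ T ℓ, η ℓ t ^ 2) ≤ (∑ t ∈ T ℓ \ T (ℓ+1), η ℓ t ^ 2) →
      (∑ t ∈ T (ℓ+1), η (ℓ+1) t ^ 2) ≤
        κ₁*(∑ t ∈ T ℓ, η ℓ t ^ 2) + c*(S ‖u (ℓ+1) - u ℓ‖ ‖z (ℓ+1) - z ℓ‖)^2 := by
    intro ℓ hμD
    have h := hstepη ℓ
    have hAin : (∑ t ∈ T (ℓ+1) ∩ T ℓ, η ℓ t ^ 2)
        = (∑ t ∈ T ℓ, η ℓ t ^ 2) - (∑ t ∈ T ℓ \ T (ℓ+1), η ℓ t ^ 2) := by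
      linarith [htotη ℓ]
    rw [hAin] at h
    rw [hκ₁def]
    nlinarith [mul_nonneg (show (0:ℝ) ≤ 1+δ-q by linarith)
      (show (0:ℝ) ≤ (∑ t ∈ T ℓ \ T (ℓ+1), η ℓ t ^ 2) - μ * (∑ t ∈ T ℓ, η ℓ t ^ 2) by linarith)]
  have hcaseζ : ∀ ℓ, μ * (∑ t ∈ T ℓ, ζ ℓ t ^ 2) ≤ (∑ t ∈ T ℓ \ T (ℓ+1), ζ ℓ t ^ 2) →
      (∑ t ∈ T (ℓ+1), ζ (ℓ+1) t ^ 2) ≤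
        κ₁*(∑ t ∈ T ℓ, ζ ℓ t ^ 2) + c*(S ‖u (ℓ+1) - u ℓ‖ ‖z (ℓ+1) - z ℓ‖)^2 := by
    intro ℓ hμD
    have h := hstepζ ℓ
    have hAin : (∑ t ∈ T (ℓ+1) ∩ T ℓ, ζ ℓ t ^ 2)
        = (∑ t ∈ T ℓ, ζ ℓ t ^ 2) - (∑ t ∈ T ℓ \ T (ℓ+1), ζ ℓ t ^ 2) := by
      linarith [htotζ ℓ]
    rw [hAin] at h
    rw [hκ₁def]
    nlinarith [mul_nonneg (show (0:ℝ) ≤ 1+δ-q by linarith)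
      (show (0:ℝ) ≤ (∑ t ∈ T ℓ \ T (ℓ+1), ζ ℓ t ^ 2) - μ * (∑ t ∈ T ℓ, ζ ℓ t ^ 2) by linarith)]
  -- contraction of the product
  have hprod : ∀ ℓ, (∑ t ∈ T (ℓ+1), η (ℓ+1) t ^ 2) * (∑ t ∈ T (ℓ+1), ζ (ℓ+1) t ^ 2) ≤
      κ * ((∑ t ∈ T ℓ, η ℓ t ^ 2) * (∑ t ∈ T ℓ, ζ ℓ t ^ 2))
        + G * (S ‖u (ℓ+1) - u ℓ‖ ‖z (ℓ+1) - z ℓ‖)^2 := by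
    intro ℓ
    have htC : (S ‖u (ℓ+1) - u ℓ‖ ‖z (ℓ+1) - z ℓ‖)^2 ≤ C^2 :=
      pow_le_pow_left₀ (hSnonneg _ _) (hCS ℓ (ℓ+1)) 2
    rcases hbranch ℓ with hb | hb
    · have h1 := hcaseη ℓ hb
      have h2 := hgenζ ℓ
      have key := prod_step _ _ _ _ _ κ₁ (1+δ) c B0 (C^2)
        (hEnn (ℓ+1)) (hFnn (ℓ+1)) (hEnn ℓ) (hFnn ℓ) (sq_nonneg _) hc0 hκ₁0 hκ₁d
        (hEB ℓ) (hFB ℓ) htC h1 h2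
      rw [hκdef, hGdef]
      nlinarith [key]
    · have h1 := hcaseζ ℓ hb
      have h2 := hgenη ℓ
      have key := prod_step _ _ _ _ _ κ₁ (1+δ) c B0 (C^2)
        (hFnn (ℓ+1)) (hEnn (ℓ+1)) (hFnn ℓ) (hEnn ℓ) (sq_nonneg _) hc0 hκ₁0 hκ₁d
        (hFB ℓ) (hEB ℓ) htC h1 h2
      rw [hκdef, hGdef]
      nlinarith [key]
  have hbG : Filter.Tendsto (fun ℓ => G * (S ‖u (ℓ+1) - u ℓ‖ ‖z (ℓ+1) - z ℓ‖)^2)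
      Filter.atTop (nhds 0) := by
    have := (hSl.pow 2).const_mul G
    simpa using this
  exact contract_lemma _ _ κ (B0*B0) hκ0 hκ1 (mul_nonneg hB00 hB00)
    (fun ℓ => mul_nonneg (hEnn ℓ) (hFnn ℓ))
    (fun ℓ => mul_le_mul (hEB ℓ) (hFB ℓ) (hFnn ℓ) hB00)
    hprod hbG
end

section
/- Let W be a normed space with a family of seminorms ‖·‖_{W(ω)} indexed by measurable subsets ω that are subadditive: ‖w‖_{W(ω₁)} + ‖w‖_{W(ω₂)} ≤ ‖w‖_{W(ω₁∪ω₂)} whenever |ω₁ ∩ ω₂| = 0. Suppose every patch contains at most C_patch elements (#T_H[T] ≤ C_patch). Then for every mesh T_H and subset U_H ⊆ T_H: Σ_{T∈U_H} ‖w‖²_{W(Ω_H[T])} ≤ (C_patch² + 1) ‖w‖²_{W(Ω_H[U_H])} for all w ∈ W. -/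
/-!
Induction on `U_H`. Pick `t₀ ∈ U_H` whose patch carries the largest seminorm `a`. Distinct
elements meet in null sets, so if the patch of `T ∈ U_H` overlaps that of `t₀` in positive
measure, both contain a common `T'`; then `T ∈ T_H[T']` with `T' ∈ T_H[t₀]`, so there are at most
`C_patch²` such `T`, each contributing at most `a²`. The patches of all other `T` meet the patch
of `t₀` in a null set, so by superadditivity `a + b` is bounded by the seminorm on the whole
union, where `b` is the seminorm on the union of these remaining patches, handled by induction.
-/

open MeasureTheory Finset

section Superadditive

variable {X : Type*} [MeasurableSpace X] {μ : Measure X} {ν : Set X → ℝ}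

theorem monotone_of_superadditive (hν0 : ∀ ω, 0 ≤ ν ω)
    (hν : ∀ ω₁ ω₂, μ (ω₁ ∩ ω₂) = 0 → ν ω₁ + ν ω₂ ≤ ν (ω₁ ∪ ω₂)) : Monotone ν := by
  intro ω₁ ω₂ h
  have := hν ω₁ (ω₂ \ ω₁) (by simp)
  rw [Set.union_sdiff_cancel h] at this
  linarith [hν0 (ω₂ \ ω₁)]

theorem sum_sq_le_mul_sq_biUnion_of_superadditive {ι : Type*} [DecidableEq ι]
    (hν0 : ∀ ω, 0 ≤ ν ω) (hν : ∀ ω₁ ω₂, μ (ω₁ ∩ ω₂) = 0 → ν ω₁ + ν ω₂ ≤ ν (ω₁ ∪ ω₂))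
    (S : ι → Set X) (K : ℕ) (U : Finset ι)
    (hK : ∀ t ∈ U, #{s ∈ U.erase t | μ (S s ∩ S t) ≠ 0} ≤ K) :
    ∑ t ∈ U, ν (S t) ^ 2 ≤ (K + 1) * ν (⋃ t ∈ U, S t) ^ 2 := by
  induction U using Finset.strongInduction with
  | H U ih =>
  rcases U.eq_empty_or_nonempty with rfl | hne
  · simp only [sum_empty]
    positivity
  obtain ⟨t₀, ht₀, hmax⟩ := U.exists_max_image (fun t => ν (S t)) hne
  set B := {s ∈ U.erase t₀ | μ (S s ∩ S t₀) ≠ 0}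
  set R := {s ∈ U.erase t₀ | μ (S s ∩ S t₀) = 0}
  have hRU : R ⊂ U := (filter_subset _ _).trans_ssubset (erase_ssubset ht₀)
  have hR : ∑ t ∈ R, ν (S t) ^ 2 ≤ (K + 1) * ν (⋃ t ∈ R, S t) ^ 2 :=
    ih R hRU fun t ht => (card_le_card (filter_subset_filter _
      (erase_subset_erase _ hRU.subset))).trans (hK t (hRU.subset ht))
  have hB : ∑ t ∈ B, ν (S t) ^ 2 ≤ K * ν (S t₀) ^ 2 :=
    calc ∑ t ∈ B, ν (S t) ^ 2 ≤ ∑ _t ∈ B, ν (S t₀) ^ 2 := sum_le_sum fun t ht =>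
          pow_le_pow_left₀ (hν0 _) (hmax t (mem_of_mem_erase (mem_filter.1 ht).1)) 2
      _ = #B * ν (S t₀) ^ 2 := by rw [sum_const, nsmul_eq_mul]
      _ ≤ K * ν (S t₀) ^ 2 := by gcongr; exact_mod_cast hK t₀ ht₀
  have hnull : μ (S t₀ ∩ ⋃ t ∈ R, S t) = 0 := by
    rw [Set.inter_iUnion₂]
    refine (measure_biUnion_null_iff R.countable_toSet).2 fun t ht => ?_
    rw [Set.inter_comm]
    exact (mem_filter.1 ht).2
  have hsplit : ∑ t ∈ U, ν (S t) ^ 2 =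
      ν (S t₀) ^ 2 + ∑ t ∈ B, ν (S t) ^ 2 + ∑ t ∈ R, ν (S t) ^ 2 := by
    rw [← add_sum_erase U _ ht₀, add_assoc, sum_filter_not_add_sum_filter]
  have hunion : ν (S t₀) + ν (⋃ t ∈ R, S t) ≤ ν (⋃ t ∈ U, S t) :=
    (hν _ _ hnull).trans (monotone_of_superadditive hν0 hν (Set.union_subset
      (Set.subset_biUnion_of_mem (u := S) ht₀) (Set.biUnion_subset_biUnion_left hRU.subset)))
  have ha := hν0 (S t₀)
  have hb := hν0 (⋃ t ∈ R, S t)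
  calc ∑ t ∈ U, ν (S t) ^ 2
      ≤ ν (S t₀) ^ 2 + K * ν (S t₀) ^ 2 + (K + 1) * ν (⋃ t ∈ R, S t) ^ 2 := by
        rw [hsplit]; gcongr
    _ ≤ (K + 1) * (ν (S t₀) + ν (⋃ t ∈ R, S t)) ^ 2 := by nlinarith [mul_nonneg ha hb]
    _ ≤ (K + 1) * ν (⋃ t ∈ U, S t) ^ 2 := by gcongr

end Superadditive

section Patch

open scoped Classical

variable {X : Type*}

noncomputable def patch (TH : Finset (Set X)) (t : Set X) : Finset (Set X) :=
  TH.filter fun t' => (t' ∩ t).Nonempty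

def patchDomain (TH : Finset (Set X)) (t : Set X) : Set X :=
  ⋃₀ (patch TH t : Set (Set X))

theorem mem_biUnion_patch_of_measure_inter_ne_zero [MeasurableSpace X] {μ : Measure X}
    {TH : Finset (Set X)}
    (hdisjoint : ∀ t ∈ TH, ∀ t' ∈ TH, t ≠ t' → μ (t ∩ t') = 0) {s t : Set X} (hs : s ∈ TH)
    (hst : μ (patchDomain TH s ∩ patchDomain TH t) ≠ 0) :
    s ∈ (patch TH t).biUnion (patch TH) := by
  by_contra hnot
  refine hst ?_
  rw [patchDomain, patchDomain, Set.sUnion_inter_sUnion]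
  refine (measure_biUnion_null_iff ((Set.toFinite _).prod (Set.toFinite _)).countable).2 ?_
  rintro ⟨a, b⟩ ⟨ha, hb⟩
  have ha' := mem_filter.1 ha
  refine hdisjoint a ha'.1 b (mem_filter.1 hb).1 fun hab => hnot ?_
  subst hab
  exact mem_biUnion.2 ⟨a, hb, mem_filter.2 ⟨hs, Set.inter_comm a s ▸ ha'.2⟩⟩

theorem card_biUnion_patch_le {TH : Finset (Set X)} {C : ℕ}
    (hpatch : ∀ t ∈ TH, #(patch TH t) ≤ C) {t : Set X} (ht : t ∈ TH) :
    #((patch TH t).biUnion (patch TH)) ≤ C ^ 2 :=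
  calc #((patch TH t).biUnion (patch TH)) ≤ ∑ t' ∈ patch TH t, #(patch TH t') := card_biUnion_le
    _ ≤ ∑ _t' ∈ patch TH t, C := sum_le_sum fun t' ht' => hpatch t' (mem_filter.1 ht').1
    _ = #(patch TH t) * C := by rw [sum_const, smul_eq_mul]
    _ ≤ C ^ 2 := by rw [sq]; gcongr; exact hpatch t ht

end Patch

open scoped Classical in
theorem stmt_19_general {X : Type*} [MeasureTheory.MeasureSpace X] {Wsp : Type*}
    (N : Wsp → Set X → ℝ) (TH : Finset (Set X)) (C_patch : ℕ)
    -- mesh properties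
    (hdisjoint : ∀ t ∈ TH, ∀ t' ∈ TH, t ≠ t' → MeasureTheory.volume (t ∩ t') = 0)
    -- seminorm properties
    (hNnonneg : ∀ w ω, 0 ≤ N w ω)
    (hsubadd : ∀ (w : Wsp) (ω₁ ω₂ : Set X), MeasureTheory.volume (ω₁ ∩ ω₂) = 0 →
      N w ω₁ + N w ω₂ ≤ N w (ω₁ ∪ ω₂))
    -- bounded patches
    (hpatch : ∀ t ∈ TH, (TH.filter fun t' => (t' ∩ t).Nonempty).card ≤ C_patch) :
    ∀ UH ⊆ TH, ∀ w : Wsp,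
      ∑ t ∈ UH, N w (⋃₀ ↑(TH.filter fun t' => (t' ∩ t).Nonempty)) ^ 2 ≤
        ((C_patch : ℝ) ^ 2 + 1) *
          N w (⋃ t ∈ UH, ⋃₀ ↑(TH.filter fun t' => (t' ∩ t).Nonempty)) ^ 2 := by
  intro UH hUH w
  have hoverlap : ∀ t ∈ UH, #{s ∈ UH.erase t |
      volume (patchDomain TH s ∩ patchDomain TH t) ≠ 0} ≤ C_patch ^ 2 := by
    intro t ht
    refine (card_le_card ?_).trans (card_biUnion_patch_le hpatch (hUH ht))
    intro s hs
    rw [mem_filter] at hs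
    exact mem_biUnion_patch_of_measure_inter_ne_zero hdisjoint
      (hUH (mem_of_mem_erase hs.1)) hs.2
  have := sum_sq_le_mul_sq_biUnion_of_superadditive (hNnonneg w) (hsubadd w)
    (patchDomain TH) _ UH hoverlap
  rwa [Nat.cast_pow] at this

open scoped Classical in
/-- Proposition 5.4 ([MSV08, Lemma 4.1, Step 2]): for a family of subadditive seminorms
`N w ω` and a mesh `TH` with patches of at most `C_patch` elements, the sum of squared
patch-seminorms over any subset `UH ⊆ TH` is bounded by
`(C_patch² + 1)` times the squared seminorm on the union of the patches. -/
theorem stmt_19 {X : Type*} [TopologicalSpace X] [MeasureTheory.MeasureSpace X] {Wsp : Type*}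
    (N : Wsp → Set X → ℝ) (Ω : Set X) (TH : Finset (Set X)) (C_patch : ℕ)
    -- mesh properties
    (hcompact : ∀ t ∈ TH, IsCompact t)
    (hposmeas : ∀ t ∈ TH, 0 < MeasureTheory.volume t)
    (hdisjoint : ∀ t ∈ TH, ∀ t' ∈ TH, t ≠ t' → MeasureTheory.volume (t ∩ t') = 0)
    (hcover : ⋃₀ ↑TH = Ω)
    -- seminorm properties
    (hNnonneg : ∀ w ω, 0 ≤ N w ω)
    (hsubadd : ∀ (w : Wsp) (ω₁ ω₂ : Set X), MeasureTheory.volume (ω₁ ∩ ω₂) = 0 →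
      N w ω₁ + N w ω₂ ≤ N w (ω₁ ∪ ω₂))
    -- bounded patches
    (hpatch : ∀ t ∈ TH, (TH.filter fun t' => (t' ∩ t).Nonempty).card ≤ C_patch) :
    ∀ UH ⊆ TH, ∀ w : Wsp,
      ∑ t ∈ UH, N w (⋃₀ ↑(TH.filter fun t' => (t' ∩ t).Nonempty)) ^ 2 ≤
        ((C_patch : ℝ) ^ 2 + 1) *
          N w (⋃ t ∈ UH, ⋃₀ ↑(TH.filter fun t' => (t' ∩ t).Nonempty)) ^ 2 :=
  stmt_19_general N TH C_patch hdisjoint hNnonneg hsubadd hpatch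
end
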